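/- arXiv:2605.11181 — 5 statements merged into one kernel-verified Lean document; each statement's English description precedes it below -/
import Mathlib

section
/- Let ‖·‖ be a norm on ℝ^{m×n} that is orthogonally invariant, i.e. ‖UAV‖ = ‖A‖ for all orthogonal U ∈ O(m), V ∈ O(n), and let G ∈ ℝ^{m×n} have a singular value decomposition G = U diag(σ) Vᵀ with U ∈ O(m), V ∈ O(n) and σ ∈ ℝ^r, r = min(m,n), having strictly positive entries. Then there exists a maximizer D of the linear functional D ↦ ⟨D, G⟩ over the unit ball {D : ‖D‖ ≤ 1} of the form D = U diag(t) Vᵀ for some t ∈ ℝ^r with nonnegative entries; consequently the regularized steepest descent direction with respect to ‖·‖, namely lmo(G) = argmax_{‖D‖≤1} ⟨D, G⟩, can be chosen to share the singular vectors of G. -/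
open scoped Matrix

/-- The Frobenius (trace) inner product `⟨A, B⟩ = tr(AᵀB) = ∑ᵢⱼ Aᵢⱼ Bᵢⱼ`. -/
def frobInner {m n : ℕ} (A B : Matrix (Fin m) (Fin n) ℝ) : ℝ :=
  ∑ i, ∑ j, A i j * B i j

/-- The `m × n` rectangular diagonal matrix with the entries of `σ ∈ ℝ^{min m n}` on the
diagonal. -/
def rectDiag (m n : ℕ) (σ : Fin (Nat.min m n) → ℝ) : Matrix (Fin m) (Fin n) ℝ :=
  Matrix.of fun i j =>
    if h : (i : ℕ) = (j : ℕ) ∧ (i : ℕ) < Nat.min m n then σ ⟨i, h.2⟩ else 0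

lemma rectDiag_apply (m n : ℕ) (σ : Fin (Nat.min m n) → ℝ) (i : Fin m) (j : Fin n) :
    rectDiag m n σ i j =
      if h : (i : ℕ) = (j : ℕ) ∧ (i : ℕ) < Nat.min m n then σ ⟨i, h.2⟩ else 0 := rfl

lemma frobInner_eq_trace {m n : ℕ} (A B : Matrix (Fin m) (Fin n) ℝ) :
    frobInner A B = Matrix.trace (Aᵀ * B) := by
  rw [frobInner, Matrix.trace, Finset.sum_comm]
  refine Finset.sum_congr rfl fun j _ => ?_
  simp [Matrix.mul_apply, Matrix.diag]

lemma frobInner_conj {m n : ℕ} (U : Matrix (Fin m) (Fin m) ℝ) (V : Matrix (Fin n) (Fin n) ℝ)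
    (A B : Matrix (Fin m) (Fin n) ℝ) (hU : U * Uᵀ = 1) (hV : V * Vᵀ = 1) :
    frobInner (U * A * Vᵀ) (U * B * Vᵀ) = frobInner A B := by
  have hU' : Uᵀ * U = 1 := mul_eq_one_comm.mp hU
  have hV' : Vᵀ * V = 1 := mul_eq_one_comm.mp hV
  rw [frobInner_eq_trace, frobInner_eq_trace]
  have h1 : Uᵀ * (U * (B * Vᵀ)) = B * Vᵀ := by
    rw [← Matrix.mul_assoc, hU', Matrix.one_mul]
  have key : (U * A * Vᵀ)ᵀ * (U * B * Vᵀ) = V * (Aᵀ * B) * Vᵀ := by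
    rw [Matrix.transpose_mul, Matrix.transpose_mul, Matrix.transpose_transpose]
    simp only [Matrix.mul_assoc, h1]
  rw [key, Matrix.trace_mul_cycle, ← Matrix.mul_assoc, hV', Matrix.one_mul]

lemma frobInner_rectDiag {m n : ℕ} (A : Matrix (Fin m) (Fin n) ℝ) (σ : Fin (Nat.min m n) → ℝ) :
    frobInner A (rectDiag m n σ) =
      ∑ k : Fin (Nat.min m n),
        A (Fin.castLE (Nat.min_le_left m n) k) (Fin.castLE (Nat.min_le_right m n) k) * σ k := by
  classical
  have hrm : Nat.min m n ≤ m := Nat.min_le_left m n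
  have hrn : Nat.min m n ≤ n := Nat.min_le_right m n
  have hrow : ∀ i : Fin m, (∑ j, A i j * rectDiag m n σ i j) =
      if h : (i : ℕ) < Nat.min m n then A i ⟨i, lt_of_lt_of_le h hrn⟩ * σ ⟨i, h⟩ else 0 := by
    intro i
    by_cases h : (i : ℕ) < Nat.min m n
    · rw [dif_pos h]
      rw [Finset.sum_eq_single (⟨(i : ℕ), lt_of_lt_of_le h hrn⟩ : Fin n)]
      · rw [rectDiag_apply, dif_pos ⟨rfl, h⟩]
      · intro j _ hj
        have hne : ¬((i : ℕ) = (j : ℕ) ∧ (i : ℕ) < Nat.min m n) := by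
          rintro ⟨h1, -⟩
          exact hj (by ext; exact h1.symm)
        rw [rectDiag_apply, dif_neg hne, mul_zero]
      · intro hi; exact absurd (Finset.mem_univ _) hi
    · rw [dif_neg h]
      refine Finset.sum_eq_zero fun j _ => ?_
      have hne : ¬((i : ℕ) = (j : ℕ) ∧ (i : ℕ) < Nat.min m n) := fun hc => h hc.2
      rw [rectDiag_apply, dif_neg hne, mul_zero]
  rw [frobInner, Finset.sum_congr rfl fun i _ => hrow i]
  have lhs_eq : (∑ i : Fin m, if h : (i : ℕ) < Nat.min m n then
        A i ⟨i, lt_of_lt_of_le h hrn⟩ * σ ⟨i, h⟩ else 0) =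
      ∑ i ∈ Finset.range m, (if h : i < Nat.min m n then
        A ⟨i, lt_of_lt_of_le h hrm⟩ ⟨i, lt_of_lt_of_le h hrn⟩ * σ ⟨i, h⟩ else 0) := by
    rw [← Fin.sum_univ_eq_sum_range (fun i => if h : i < Nat.min m n then
        A ⟨i, lt_of_lt_of_le h hrm⟩ ⟨i, lt_of_lt_of_le h hrn⟩ * σ ⟨i, h⟩ else 0) m]
  rw [lhs_eq]
  rw [← Finset.sum_subset (Finset.range_subset_range.mpr hrm) (fun x _ hx => by
    have hxr : ¬ x < Nat.min m n := fun hc => hx (Finset.mem_range.mpr hc)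
    rw [dif_neg hxr])]
  rw [← Fin.sum_univ_eq_sum_range (fun i => if h : i < Nat.min m n then
        A ⟨i, lt_of_lt_of_le h hrm⟩ ⟨i, lt_of_lt_of_le h hrn⟩ * σ ⟨i, h⟩ else 0) (Nat.min m n)]
  refine Finset.sum_congr rfl fun k _ => ?_
  rw [dif_pos k.isLt]
  rfl

/-- Diagonal sign matrix flipping coordinate `k`. -/
def flipM (m : ℕ) (k : ℕ) : Matrix (Fin m) (Fin m) ℝ :=
  Matrix.diagonal (fun x => if (x : ℕ) = k then -1 else 1)

lemma flipM_transpose (m k : ℕ) : (flipM m k)ᵀ = flipM m k :=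
  Matrix.diagonal_transpose _

lemma flipM_orth (m k : ℕ) : flipM m k * (flipM m k)ᵀ = 1 := by
  rw [flipM_transpose, flipM, Matrix.diagonal_mul_diagonal]
  rw [show (fun i : Fin m => (if (i : ℕ) = k then (-1:ℝ) else 1) * (if (i:ℕ) = k then -1 else 1))
      = fun _ => (1:ℝ) from funext fun i => by split <;> norm_num]
  exact Matrix.diagonal_one

/-- One averaging step zeroing out off-diagonal entries in row/column `k`. -/
noncomputable def diagStep (m n : ℕ) (k : ℕ) (B : Matrix (Fin m) (Fin n) ℝ) : Matrix (Fin m) (Fin n) ℝ :=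
  (2:ℝ)⁻¹ • (B + flipM m k * B * flipM n k)

/-- Iterate `diagStep` for `k = 0, …, K-1`. -/
noncomputable def diagIter (m n : ℕ) (K : ℕ) (B : Matrix (Fin m) (Fin n) ℝ) : Matrix (Fin m) (Fin n) ℝ :=
  Nat.rec B (fun j Bj => diagStep m n j Bj) K

lemma diagStep_apply (m n k : ℕ) (B : Matrix (Fin m) (Fin n) ℝ) (i : Fin m) (j : Fin n) :
    diagStep m n k B i j =
      if ((i : ℕ) = k ↔ (j : ℕ) = k) then B i j else 0 := by
  have h1 : (flipM m k * B * flipM n k) i j =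
      (if (i : ℕ) = k then (-1:ℝ) else 1) * B i j * (if (j : ℕ) = k then (-1:ℝ) else 1) := by
    rw [flipM, flipM, Matrix.mul_diagonal, Matrix.diagonal_mul]
  have h2 : diagStep m n k B i j = (2:ℝ)⁻¹ * (B i j + (flipM m k * B * flipM n k) i j) := rfl
  rw [h2, h1]
  by_cases hi : (i : ℕ) = k <;> by_cases hj : (j : ℕ) = k <;>
    simp [hi, hj] <;> ring

lemma diagIter_succ (m n K : ℕ) (B : Matrix (Fin m) (Fin n) ℝ) :
    diagIter m n (K + 1) B = diagStep m n K (diagIter m n K B) := rfl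

lemma diagIter_apply (m n K : ℕ) (B : Matrix (Fin m) (Fin n) ℝ) (i : Fin m) (j : Fin n) :
    diagIter m n K B i j =
      if ((i : ℕ) = (j : ℕ) ∨ (K ≤ (i : ℕ) ∧ K ≤ (j : ℕ))) then B i j else 0 := by
  induction K with
  | zero => simp [diagIter]
  | succ K ih =>
    rw [diagIter_succ, diagStep_apply, ih]
    split_ifs <;> first | rfl | omega

lemma diagIter_min (m n : ℕ) (B : Matrix (Fin m) (Fin n) ℝ) :
    diagIter m n (Nat.min m n) B = rectDiag m n
      (fun k => B (Fin.castLE (Nat.min_le_left m n) k) (Fin.castLE (Nat.min_le_right m n) k)) := by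
  ext i j
  rw [diagIter_apply, rectDiag_apply]
  have h1 := i.isLt
  have h2 := j.isLt
  have h5 : Nat.min m n = m ∨ Nat.min m n = n := min_choice m n
  split_ifs with ha hb
  · congr 1 <;> (apply Fin.ext; simp [Fin.castLE]) <;> omega
  · exfalso; omega
  · exfalso; omega
  · rfl

lemma rectDiag_abs (m n : ℕ) (s : Fin (Nat.min m n) → ℝ) :
    ∃ F : Matrix (Fin m) (Fin m) ℝ, F * Fᵀ = 1 ∧
      F * rectDiag m n s = rectDiag m n (fun k => |s k|) := by
  classical
  set d : Fin m → ℝ := fun i =>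
    if h : (i : ℕ) < Nat.min m n then (if s ⟨i, h⟩ < 0 then -1 else 1) else 1 with hd
  have hd1 : ∀ i, d i * d i = 1 := by
    intro i
    rw [hd]
    dsimp only
    split_ifs <;> norm_num
  refine ⟨Matrix.diagonal d, ?_, ?_⟩
  · rw [Matrix.diagonal_transpose, Matrix.diagonal_mul_diagonal,
      show (fun i => d i * d i) = fun _ => (1:ℝ) from funext hd1, Matrix.diagonal_one]
  · ext i j
    rw [Matrix.diagonal_mul, rectDiag_apply, rectDiag_apply]
    by_cases h : (i : ℕ) = (j : ℕ) ∧ (i : ℕ) < Nat.min m n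
    · rw [dif_pos h, dif_pos h, hd]
      dsimp only
      rw [dif_pos h.2]
      by_cases hs : s ⟨i, h.2⟩ < 0
      · rw [if_pos hs, abs_of_neg hs]; ring
      · rw [if_neg hs, abs_of_nonneg (not_lt.mp hs), one_mul]
    · rw [dif_neg h, dif_neg h, mul_zero]

lemma exists_max_of_norm (E : Type*) [AddCommGroup E] [Module ℝ E] [FiniteDimensional ℝ E]
    (N : E → ℝ)
    (hN_add : ∀ A B, N (A + B) ≤ N A + N B)
    (hN_smul : ∀ (c : ℝ) A, N (c • A) = |c| * N A)
    (hN_def : ∀ A, N A = 0 ↔ A = 0)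
    (L : E →ₗ[ℝ] ℝ) :
    ∃ x, N x ≤ 1 ∧ ∀ y, N y ≤ 1 → L y ≤ L x := by
  classical
  have hN0 : N 0 = 0 := (hN_def 0).mpr rfl
  have hNneg : ∀ A, N (-A) = N A := fun A => by
    rw [show -A = (-1 : ℝ) • A by simp, hN_smul]; simp
  letI : NormedAddCommGroup E :=
    AddGroupNorm.toNormedAddCommGroup
      { toFun := N
        map_zero' := hN0
        add_le' := hN_add
        neg' := hNneg
        eq_zero_of_map_eq_zero' := fun A h => (hN_def A).mp h }
  have hnorm : ∀ A : E, ‖A‖ = N A := fun _ => rfl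
  letI : NormedSpace ℝ E :=
    { norm_smul_le := fun c x => le_of_eq (by rw [hnorm, hnorm, hN_smul, Real.norm_eq_abs]) }
  have hLcont : Continuous L := L.continuous_of_finiteDimensional
  have hcompact : IsCompact (Metric.closedBall (0 : E) 1) := isCompact_closedBall _ _
  obtain ⟨x, hx_mem, hx_max⟩ :=
    hcompact.exists_isMaxOn ⟨0, Metric.mem_closedBall_self zero_le_one⟩ hLcont.continuousOn
  refine ⟨x, by rw [← hnorm]; exact mem_closedBall_zero_iff.mp hx_mem, fun y hy => ?_⟩
  exact hx_max (mem_closedBall_zero_iff.mpr (by rw [hnorm]; exact hy))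

/-- If `N` is an orthogonally invariant norm on `ℝ^{m×n}` and
`G = U diag(σ) Vᵀ` is an SVD of `G` with strictly positive singular values, then the linear
functional `D ↦ ⟨D, G⟩` admits a maximizer over the unit ball of `N` of the form
`U diag(t) Vᵀ` with `t` having nonnegative entries. -/
theorem stmt1 {m n : ℕ} (N : Matrix (Fin m) (Fin n) ℝ → ℝ)
    -- `N` is a norm:
    (hN_add : ∀ A B, N (A + B) ≤ N A + N B)
    (hN_smul : ∀ (c : ℝ) A, N (c • A) = |c| * N A)
    (hN_def : ∀ A, N A = 0 ↔ A = 0)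
    -- `N` is orthogonally invariant:
    (hN_inv : ∀ (U : Matrix (Fin m) (Fin m) ℝ) (V : Matrix (Fin n) (Fin n) ℝ)
      (A : Matrix (Fin m) (Fin n) ℝ), U * Uᵀ = 1 → V * Vᵀ = 1 → N (U * A * Vᵀ) = N A)
    (G : Matrix (Fin m) (Fin n) ℝ)
    (U : Matrix (Fin m) (Fin m) ℝ) (V : Matrix (Fin n) (Fin n) ℝ)
    (σ : Fin (Nat.min m n) → ℝ)
    (hU : U * Uᵀ = 1) (hV : V * Vᵀ = 1) (hσ : ∀ i, 0 < σ i)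
    (hSVD : G = U * rectDiag m n σ * Vᵀ) :
    ∃ t : Fin (Nat.min m n) → ℝ, (∀ i, 0 ≤ t i) ∧
      N (U * rectDiag m n t * Vᵀ) ≤ 1 ∧
      ∀ D : Matrix (Fin m) (Fin n) ℝ, N D ≤ 1 →
        frobInner D G ≤ frobInner (U * rectDiag m n t * Vᵀ) G := by
  classical
  have hU' : Uᵀ * U = 1 := mul_eq_one_comm.mp hU
  have hV' : Vᵀ * V = 1 := mul_eq_one_comm.mp hV
  let L : Matrix (Fin m) (Fin n) ℝ →ₗ[ℝ] ℝ :=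
    { toFun := fun D => frobInner D G
      map_add' := fun A B => by
        simp [frobInner, add_mul, Finset.sum_add_distrib]
      map_smul' := fun c A => by
        simp [frobInner, Finset.mul_sum, mul_assoc] }
  obtain ⟨Dstar, hDstar_norm, hD_max⟩ :=
    exists_max_of_norm (Matrix (Fin m) (Fin n) ℝ) N hN_add hN_smul hN_def L
  -- conjugate back
  set B : Matrix (Fin m) (Fin n) ℝ := Uᵀ * Dstar * V with hB
  have hUBV : U * B * Vᵀ = Dstar := by
    rw [hB]
    calc U * (Uᵀ * Dstar * V) * Vᵀ = (U * Uᵀ) * Dstar * (V * Vᵀ) := by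
          simp only [Matrix.mul_assoc]
      _ = Dstar := by rw [hU, hV, Matrix.one_mul, Matrix.mul_one]
  set s : Fin (Nat.min m n) → ℝ := fun k =>
    B (Fin.castLE (Nat.min_le_left m n) k) (Fin.castLE (Nat.min_le_right m n) k) with hs
  -- the diagonal extraction does not increase the norm
  have hIter : ∀ K, N (U * diagIter m n K B * Vᵀ) ≤ N (U * B * Vᵀ) := by
    intro K
    induction K with
    | zero => exact le_refl _
    | succ K ih =>
      refine le_trans ?_ ih
      rw [diagIter_succ]
      set C := diagIter m n K B with hC
      have hsplit : U * diagStep m n K C * Vᵀ =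
          (2:ℝ)⁻¹ • (U * C * Vᵀ + (U * flipM m K) * C * (V * flipM n K)ᵀ) := by
        rw [diagStep]
        rw [Matrix.mul_smul, Matrix.smul_mul]
        congr 1
        rw [Matrix.mul_add, Matrix.add_mul]
        congr 1
        rw [Matrix.transpose_mul, flipM_transpose]
        simp only [Matrix.mul_assoc]
      have horthU : (U * flipM m K) * (U * flipM m K)ᵀ = 1 := by
        rw [Matrix.transpose_mul, flipM_transpose,
          show U * flipM m K * (flipM m K * Uᵀ) = U * (flipM m K * (flipM m K)ᵀ) * Uᵀ by
            rw [flipM_transpose]; simp only [Matrix.mul_assoc],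
          flipM_orth, Matrix.mul_one, hU]
      have horthV : (V * flipM n K) * (V * flipM n K)ᵀ = 1 := by
        rw [Matrix.transpose_mul, flipM_transpose,
          show V * flipM n K * (flipM n K * Vᵀ) = V * (flipM n K * (flipM n K)ᵀ) * Vᵀ by
            rw [flipM_transpose]; simp only [Matrix.mul_assoc],
          flipM_orth, Matrix.mul_one, hV]
      have h2 : N ((U * flipM m K) * C * (V * flipM n K)ᵀ) = N C :=
        hN_inv _ _ _ horthU horthV
      have h3 : N (U * C * Vᵀ) = N C := hN_inv _ _ _ hU hV
      calc N (U * diagStep m n K C * Vᵀ)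
          = |(2:ℝ)⁻¹| * N (U * C * Vᵀ + (U * flipM m K) * C * (V * flipM n K)ᵀ) := by
            rw [hsplit, hN_smul]
        _ ≤ |(2:ℝ)⁻¹| * (N (U * C * Vᵀ) + N ((U * flipM m K) * C * (V * flipM n K)ᵀ)) := by
            apply mul_le_mul_of_nonneg_left (hN_add _ _) (abs_nonneg _)
        _ = N (U * C * Vᵀ) := by rw [h2, h3]; rw [abs_of_pos (by norm_num : (0:ℝ) < 2⁻¹)]; ring
  have hRect : N (U * rectDiag m n s * Vᵀ) ≤ 1 := by
    have := hIter (Nat.min m n)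
    rw [diagIter_min, hUBV] at this
    exact le_trans this hDstar_norm
  -- pass to absolute values
  obtain ⟨F, hF_orth, hF_mul⟩ := rectDiag_abs m n s
  refine ⟨fun k => |s k|, fun k => abs_nonneg _, ?_, ?_⟩
  · have horthUF : (U * F) * (U * F)ᵀ = 1 := by
      rw [Matrix.transpose_mul,
        show U * F * (Fᵀ * Uᵀ) = U * (F * Fᵀ) * Uᵀ by simp only [Matrix.mul_assoc],
        hF_orth, Matrix.mul_one, hU]
    have : U * rectDiag m n (fun k => |s k|) * Vᵀ = (U * F) * rectDiag m n s * Vᵀ := by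
      rw [← hF_mul]; simp only [Matrix.mul_assoc]
    rw [this, hN_inv _ _ _ horthUF hV, ← hN_inv U V (rectDiag m n s) hU hV]
    exact hRect
  · intro D hD
    -- value at the candidate point
    have hval : frobInner (U * rectDiag m n (fun k => |s k|) * Vᵀ) G =
        ∑ k, |s k| * σ k := by
      rw [hSVD, frobInner_conj U V _ _ hU hV, frobInner_rectDiag]
      refine Finset.sum_congr rfl fun k _ => ?_
      congr 1
      rw [rectDiag_apply, dif_pos ⟨rfl, k.isLt⟩]
      rfl
    -- value at the maximizer
    have hvalstar : frobInner Dstar G = ∑ k, s k * σ k := by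
      rw [hSVD, ← hUBV, frobInner_conj U V _ _ hU hV, frobInner_rectDiag]
    have hle : frobInner D G ≤ frobInner Dstar G := hD_max D hD
    rw [hval]
    refine le_trans hle ?_
    rw [hvalstar]
    exact Finset.sum_le_sum fun k _ =>
      mul_le_mul_of_nonneg_right (le_abs_self _) (hσ k).le
end

section
/- Let ‖·‖ be a norm on ℝ^{m×n} with dual norm ‖·‖_*, and let f : ℝ^{m×n} → ℝ be differentiable with gradients L-Lipschitz with respect to ‖·‖ (i.e. ‖∇f(X) − ∇f(Y)‖_* ≤ L‖X − Y‖). Let X ∈ ℝ^{m×n}, G = ∇f(X), D ∈ ℝ^{m×n} with ‖D‖ ≤ M for some M > 0, and set X' = X − α⟨G, D⟩D with α = η/(L·M²) for some η ∈ (0, 2). Then f(X') ≤ f(X) − (η(1 − η/2)/(L·M²))·⟨G, D⟩². -/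
/-!
The descent lemma `f (X + H) ≤ f X + ⟨∇f(X), H⟩ + (L/2) N(H)²` follows by integrating
`⟨∇f(X + tH) − ∇f(X), H⟩ ≤ ‖∇f(X + tH) − ∇f(X)‖_* N(H) ≤ L t N(H)²` over `t ∈ [0, 1]`.
Applied to `H = −c D` with `c = α ⟨G, D⟩`, the linear term is `−c ⟨G, D⟩` and the quadratic
term is at most `(L/2) c² M²`; for `α = η / (L M²)` their sum is `−η (1 − η/2) ⟨G, D⟩² / (L M²)`.
-/

open scoped Matrix

attribute [local instance] Matrix.normedAddCommGroup Matrix.normedSpace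

/-- The dual norm `‖V‖_* = sup {⟨U, V⟩ : N U ≤ 1}` of a norm `N` on `ℝ^{m×n}`. -/
noncomputable def dualNorm {m n : ℕ} (N : Matrix (Fin m) (Fin n) ℝ → ℝ)
    (V : Matrix (Fin m) (Fin n) ℝ) : ℝ :=
  sSup ((fun U => frobInner U V) '' {U | N U ≤ 1})

-- `t ↦ φ t - t φ'(0) - K t² / 2` has nonpositive derivative on `(0, 1)`, hence decreases.
theorem le_add_deriv_add_of_deriv_sub_le {φ φ' : ℝ → ℝ} (hφ : ∀ t, HasDerivAt φ (φ' t) t)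
    (K : ℝ) (hK : ∀ t ∈ Set.Ioo (0 : ℝ) 1, φ' t - φ' 0 ≤ K * t) :
    φ 1 ≤ φ 0 + φ' 0 + K / 2 := by
  set ψ : ℝ → ℝ := fun t => φ t - t * φ' 0 - K / 2 * t ^ 2
  have hψ : ∀ t, HasDerivAt ψ (φ' t - φ' 0 - K * t) t := by
    intro t
    have hquad : HasDerivAt (fun s : ℝ => K / 2 * s ^ 2) (K * t) t :=
      ((hasDerivAt_pow 2 t).const_mul (K / 2)).congr_deriv (by norm_num; ring)
    exact (((hφ t).sub ((hasDerivAt_id t).mul_const (φ' 0))).sub hquad).congr_deriv (by simp)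
  have hanti : AntitoneOn ψ (Set.Icc 0 1) := by
    refine antitoneOn_of_deriv_nonpos (convex_Icc 0 1)
      (fun t _ => (hψ t).continuousAt.continuousWithinAt)
      (fun t _ => (hψ t).differentiableAt.differentiableWithinAt) fun t ht => ?_
    rw [interior_Icc] at ht
    rw [(hψ t).deriv]
    linarith [hK t ht]
  have h10 : ψ 1 ≤ ψ 0 := hanti (by simp) (by simp) zero_le_one
  simp only [ψ] at h10
  linarith

section NormLike

variable {E : Type*} [AddCommGroup E] [Module ℝ E] {N : E → ℝ}

theorem nonneg_of_add_le_of_smul_eq (hN_add : ∀ x y, N (x + y) ≤ N x + N y)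
    (hN_smul : ∀ (c : ℝ) x, N (c • x) = |c| * N x) (x : E) : 0 ≤ N x :=
  apply_nonneg (Seminorm.of N hN_add hN_smul) x

-- Every linear functional is continuous for the norm `N`, since `E` is finite-dimensional.
theorem exists_le_const_mul_of_norm [FiniteDimensional ℝ E]
    (hN_add : ∀ x y, N (x + y) ≤ N x + N y) (hN_smul : ∀ (c : ℝ) x, N (c • x) = |c| * N x)
    (hN_def : ∀ x, N x = 0 ↔ x = 0) (ℓ : E →ₗ[ℝ] ℝ) :
    ∃ C, 0 ≤ C ∧ ∀ x, ℓ x ≤ C * N x := by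
  let _ : NormedAddCommGroup E := AddGroupNorm.toNormedAddCommGroup
    { toFun := N
      map_zero' := (hN_def 0).2 rfl
      add_le' := hN_add
      neg' := fun x => by simpa using hN_smul (-1) x
      eq_zero_of_map_eq_zero' := fun x => (hN_def x).1 }
  let _ : NormedSpace ℝ E := ⟨fun c x => (hN_smul c x).le⟩
  let ℓc := LinearMap.toContinuousLinearMap ℓ
  exact ⟨‖ℓc‖, norm_nonneg _, fun x => (Real.le_norm_self _).trans (ℓc.le_opNorm x)⟩

end NormLike

section Frobenius

variable {m n : ℕ}

def frobInnerLeft (W : Matrix (Fin m) (Fin n) ℝ) : Matrix (Fin m) (Fin n) ℝ →ₗ[ℝ] ℝ where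
  toFun U := frobInner U W
  map_add' A B := by
    simp only [frobInner, Matrix.add_apply, add_mul, Finset.sum_add_distrib]
  map_smul' c A := by
    simp only [frobInner, Matrix.smul_apply, smul_eq_mul, Finset.mul_sum, mul_assoc,
      RingHom.id_apply]

theorem frobInner_comm (A B : Matrix (Fin m) (Fin n) ℝ) : frobInner A B = frobInner B A := by
  simp only [frobInner, mul_comm]

theorem frobInner_sub_left (A B W : Matrix (Fin m) (Fin n) ℝ) :
    frobInner (A - B) W = frobInner A W - frobInner B W :=
  map_sub (frobInnerLeft W) A B

theorem frobInner_smul_right (c : ℝ) (W A : Matrix (Fin m) (Fin n) ℝ) :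
    frobInner W (c • A) = c * frobInner W A := by
  simp only [frobInner, Matrix.smul_apply, smul_eq_mul, Finset.mul_sum, mul_left_comm]

variable {N : Matrix (Fin m) (Fin n) ℝ → ℝ}

theorem frobInner_le_dualNorm_mul (hN_add : ∀ A B, N (A + B) ≤ N A + N B)
    (hN_smul : ∀ (c : ℝ) A, N (c • A) = |c| * N A) (hN_def : ∀ A, N A = 0 ↔ A = 0)
    (W H : Matrix (Fin m) (Fin n) ℝ) : frobInner H W ≤ dualNorm N W * N H := by
  obtain ⟨C, hC0, hC⟩ := exists_le_const_mul_of_norm hN_add hN_smul hN_def (frobInnerLeft W)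
  have hbdd : BddAbove ((fun U => frobInner U W) '' {U | N U ≤ 1}) := by
    refine ⟨C, ?_⟩
    rintro _ ⟨U, hU, rfl⟩
    exact (hC U).trans (mul_le_of_le_one_right hC0 hU)
  rcases (nonneg_of_add_le_of_smul_eq hN_add hN_smul H).eq_or_lt with hH | hH
  · obtain rfl := (hN_def H).1 hH.symm
    rw [← hH, mul_zero]
    exact (map_zero (frobInnerLeft W)).le
  · have hunit : N ((N H)⁻¹ • H) ≤ 1 := by
      rw [hN_smul, abs_of_pos (inv_pos.2 hH), inv_mul_cancel₀ hH.ne']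
    have hle : (N H)⁻¹ * frobInner H W ≤ dualNorm N W :=
      (map_smul (frobInnerLeft W) (N H)⁻¹ H).symm.trans_le (le_csSup hbdd ⟨_, hunit, rfl⟩)
    rwa [inv_mul_le_iff₀ hH, mul_comm] at hle

theorem descent_lemma (hN_add : ∀ A B, N (A + B) ≤ N A + N B)
    (hN_smul : ∀ (c : ℝ) A, N (c • A) = |c| * N A) (hN_def : ∀ A, N A = 0 ↔ A = 0)
    {f : Matrix (Fin m) (Fin n) ℝ → ℝ} {grad : Matrix (Fin m) (Fin n) ℝ → Matrix (Fin m) (Fin n) ℝ}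
    {Df : Matrix (Fin m) (Fin n) ℝ → (Matrix (Fin m) (Fin n) ℝ →L[ℝ] ℝ)}
    (hDf : ∀ X, HasFDerivAt f (Df X) X) (hDf_grad : ∀ X H, Df X H = frobInner (grad X) H)
    {L : ℝ} (hLip : ∀ X Y, dualNorm N (grad X - grad Y) ≤ L * N (X - Y))
    (X H : Matrix (Fin m) (Fin n) ℝ) :
    f (X + H) ≤ f X + frobInner (grad X) H + L / 2 * N H ^ 2 := by
  have hNH := nonneg_of_add_le_of_smul_eq hN_add hN_smul H
  have hφ : ∀ t : ℝ, HasDerivAt (fun s : ℝ => f (X + s • H)) (Df (X + t • H) H) t := fun t =>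
    (hDf _).comp_hasDerivAt t (by simpa using ((hasDerivAt_id t).smul_const H).const_add X)
  have hK : ∀ t ∈ Set.Ioo (0 : ℝ) 1,
      Df (X + t • H) H - Df (X + (0 : ℝ) • H) H ≤ L * N H ^ 2 * t := by
    intro t ht
    rw [zero_smul, add_zero]
    calc Df (X + t • H) H - Df X H = frobInner H (grad (X + t • H) - grad X) := by
          rw [frobInner_comm H, frobInner_sub_left, hDf_grad, hDf_grad]
      _ ≤ dualNorm N (grad (X + t • H) - grad X) * N H :=
          frobInner_le_dualNorm_mul hN_add hN_smul hN_def _ H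
      _ ≤ L * N (t • H) * N H := by
          gcongr
          simpa using hLip (X + t • H) X
      _ = L * N H ^ 2 * t := by
          rw [hN_smul, abs_of_pos ht.1]
          ring
  have h := le_add_deriv_add_of_deriv_sub_le hφ _ hK
  simp only [one_smul, zero_smul, add_zero, hDf_grad] at h
  linarith

end Frobenius

theorem stmt3_general {m n : ℕ} (N : Matrix (Fin m) (Fin n) ℝ → ℝ)
    -- `N` is a norm:
    (hN_add : ∀ A B, N (A + B) ≤ N A + N B)
    (hN_smul : ∀ (c : ℝ) A, N (c • A) = |c| * N A)
    (hN_def : ∀ A, N A = 0 ↔ A = 0)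
    (f : Matrix (Fin m) (Fin n) ℝ → ℝ)
    (grad : Matrix (Fin m) (Fin n) ℝ → Matrix (Fin m) (Fin n) ℝ)
    (Df : Matrix (Fin m) (Fin n) ℝ → (Matrix (Fin m) (Fin n) ℝ →L[ℝ] ℝ))
    -- `f` is differentiable with gradient `grad` (w.r.t. the Frobenius inner product):
    (hDf : ∀ X, HasFDerivAt f (Df X) X)
    (hDf_grad : ∀ X H, Df X H = frobInner (grad X) H)
    (L : ℝ) (hL : 0 < L)
    -- gradients are `L`-Lipschitz with respect to `N`:
    (hLip : ∀ X Y, dualNorm N (grad X - grad Y) ≤ L * N (X - Y))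
    (X D : Matrix (Fin m) (Fin n) ℝ) (M : ℝ) (hM : 0 < M) (hD : N D ≤ M)
    (η : ℝ) :
    f (X - (η / (L * M ^ 2) * frobInner (grad X) D) • D) ≤
      f X - η * (1 - η / 2) / (L * M ^ 2) * (frobInner (grad X) D) ^ 2 := by
  set g := frobInner (grad X) D
  set c := η / (L * M ^ 2) * g
  have hND := nonneg_of_add_le_of_smul_eq hN_add hN_smul D
  have hstep : N ((-c) • D) ^ 2 ≤ c ^ 2 * M ^ 2 := by
    rw [hN_smul, abs_neg, mul_pow, sq_abs]
    gcongr
  calc f (X - c • D) = f (X + (-c) • D) := by rw [neg_smul, ← sub_eq_add_neg]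
    _ ≤ f X + frobInner (grad X) ((-c) • D) + L / 2 * N ((-c) • D) ^ 2 :=
        descent_lemma hN_add hN_smul hN_def hDf hDf_grad hLip X _
    _ ≤ f X - c * g + L / 2 * (c ^ 2 * M ^ 2) := by
        rw [frobInner_smul_right]
        linarith [mul_le_mul_of_nonneg_left hstep (half_pos hL).le]
    _ = f X - η * (1 - η / 2) / (L * M ^ 2) * g ^ 2 := by
        simp only [c]
        field_simp
        ring

/-- Per-step descent estimate: if `f` has `L`-Lipschitz gradients with respect
to the norm `N` (in the dual-norm sense), `G = ∇f(X)`, `N D ≤ M`, and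
`X' = X − α ⟨G, D⟩ D` with `α = η/(L M²)`, `η ∈ (0,2)`, then
`f(X') ≤ f(X) − (η(1 − η/2)/(L M²)) ⟨G, D⟩²`. -/
theorem stmt3 {m n : ℕ} (N : Matrix (Fin m) (Fin n) ℝ → ℝ)
    -- `N` is a norm:
    (hN_add : ∀ A B, N (A + B) ≤ N A + N B)
    (hN_smul : ∀ (c : ℝ) A, N (c • A) = |c| * N A)
    (hN_def : ∀ A, N A = 0 ↔ A = 0)
    (f : Matrix (Fin m) (Fin n) ℝ → ℝ)
    (grad : Matrix (Fin m) (Fin n) ℝ → Matrix (Fin m) (Fin n) ℝ)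
    (Df : Matrix (Fin m) (Fin n) ℝ → (Matrix (Fin m) (Fin n) ℝ →L[ℝ] ℝ))
    -- `f` is differentiable with gradient `grad` (w.r.t. the Frobenius inner product):
    (hDf : ∀ X, HasFDerivAt f (Df X) X)
    (hDf_grad : ∀ X H, Df X H = frobInner (grad X) H)
    (L : ℝ) (hL : 0 < L)
    -- gradients are `L`-Lipschitz with respect to `N`:
    (hLip : ∀ X Y, dualNorm N (grad X - grad Y) ≤ L * N (X - Y))
    (X D : Matrix (Fin m) (Fin n) ℝ) (M : ℝ) (hM : 0 < M) (hD : N D ≤ M)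
    (η : ℝ) (hη : η ∈ Set.Ioo (0 : ℝ) 2) :
    f (X - (η / (L * M ^ 2) * frobInner (grad X) D) • D) ≤
      f X - η * (1 - η / 2) / (L * M ^ 2) * (frobInner (grad X) D) ^ 2 :=
  stmt3_general N hN_add hN_smul hN_def f grad Df hDf hDf_grad L hL hLip X D M hM hD η
end

section
/- Let G ∈ ℝ^{m×n} be such that G·Gᵀ is invertible, let L ∈ ℝ^{m×m} be invertible, and let R = λQ where λ ∈ ℝ, λ ≠ 0, and Q ∈ ℝ^{n×n} is orthogonal. Set G' = L⁻ᵀ G R⁻ᵀ. Then G'·G'ᵀ is invertible and (G'·G'ᵀ)⁻¹ G' = L·(G·Gᵀ)⁻¹·G·R. -/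
open scoped Matrix

/-!
If `R Rᵀ = μ • 1` with `μ ≠ 0` (a conformal matrix, e.g. `R = λ Q` with `Q` orthogonal and
`μ = λ²`), then `R⁻ᵀ = μ⁻¹ • R`, so `G' = μ⁻¹ • L⁻ᵀ G R` and `G' G'ᵀ = μ⁻¹ • L⁻ᵀ (G Gᵀ) L⁻¹`.
Its inverse is `μ • L (G Gᵀ)⁻¹ Lᵀ`, and multiplying by `G'` the factors `Lᵀ L⁻ᵀ` and `μ μ⁻¹`
cancel, leaving `L (G Gᵀ)⁻¹ G R`.
-/

namespace Matrix

variable {m n K : Type*} [Fintype m] [Fintype n] [DecidableEq n] [Field K]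

theorem transpose_inv_eq_smul_of_mul_transpose_eq_smul {R : Matrix n n K} {μ : K} (hμ : μ ≠ 0)
    (hR : R * Rᵀ = μ • 1) : (R⁻¹)ᵀ = μ⁻¹ • R := by
  have hinv : R⁻¹ = μ⁻¹ • Rᵀ := by
    apply inv_eq_right_inv
    rw [Matrix.mul_smul, hR, smul_smul, inv_mul_cancel₀ hμ, one_smul]
  rw [hinv, transpose_smul, transpose_transpose]

theorem mul_mul_mul_transpose_of_mul_transpose_eq_smul (A : Matrix m m K) (G : Matrix m n K)
    {R : Matrix n n K} {μ : K} (hR : R * Rᵀ = μ • 1) :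
    A * G * R * (A * G * R)ᵀ = μ • (A * (G * Gᵀ) * Aᵀ) := by
  calc A * G * R * (A * G * R)ᵀ = A * G * (R * Rᵀ) * Gᵀ * Aᵀ := by
        simp only [transpose_mul, Matrix.mul_assoc]
    _ = μ • (A * (G * Gᵀ) * Aᵀ) := by
        simp only [hR, Matrix.mul_smul, Matrix.smul_mul, Matrix.one_mul, Matrix.mul_assoc]

variable [DecidableEq m]

theorem transpose_inv_mul_mul_inv_mul_mul_mul_transpose {L : Matrix m m K} (hL : IsUnit L)
    {H : Matrix m m K} (hH : IsUnit H) : (L⁻¹)ᵀ * H * L⁻¹ * (L * H⁻¹ * Lᵀ) = 1 := by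
  have hLd : IsUnit L.det := (isUnit_iff_isUnit_det L).mp hL
  have hHd : IsUnit H.det := (isUnit_iff_isUnit_det H).mp hH
  calc (L⁻¹)ᵀ * H * L⁻¹ * (L * H⁻¹ * Lᵀ) = (L⁻¹)ᵀ * (H * (L⁻¹ * L) * H⁻¹) * Lᵀ := by
        simp only [Matrix.mul_assoc]
    _ = (L * L⁻¹)ᵀ := by
        rw [nonsing_inv_mul L hLd, Matrix.mul_one, mul_nonsing_inv H hHd, Matrix.mul_one,
          transpose_mul]
    _ = 1 := by rw [mul_nonsing_inv L hLd, transpose_one]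

theorem isUnit_and_inv_mul_of_mul_transpose_eq_smul {G : Matrix m n K} (hG : IsUnit (G * Gᵀ))
    {L : Matrix m m K} (hL : IsUnit L) {R : Matrix n n K} {μ : K} (hμ : μ ≠ 0)
    (hR : R * Rᵀ = μ • 1) :
    IsUnit ((L⁻¹)ᵀ * G * (R⁻¹)ᵀ * ((L⁻¹)ᵀ * G * (R⁻¹)ᵀ)ᵀ) ∧
      ((L⁻¹)ᵀ * G * (R⁻¹)ᵀ * ((L⁻¹)ᵀ * G * (R⁻¹)ᵀ)ᵀ)⁻¹ * ((L⁻¹)ᵀ * G * (R⁻¹)ᵀ) =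
        L * (G * Gᵀ)⁻¹ * G * R := by
  have hG' : (L⁻¹)ᵀ * G * (R⁻¹)ᵀ = μ⁻¹ • ((L⁻¹)ᵀ * G * R) := by
    rw [transpose_inv_eq_smul_of_mul_transpose_eq_smul hμ hR, Matrix.mul_smul]
  have hGram : (L⁻¹)ᵀ * G * (R⁻¹)ᵀ * ((L⁻¹)ᵀ * G * (R⁻¹)ᵀ)ᵀ =
      μ⁻¹ • ((L⁻¹)ᵀ * (G * Gᵀ) * L⁻¹) := by
    rw [hG', transpose_smul, Matrix.smul_mul, Matrix.mul_smul, smul_smul,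
      mul_mul_mul_transpose_of_mul_transpose_eq_smul _ _ hR, smul_smul, transpose_transpose,
      inv_mul_cancel_right₀ hμ]
  have hRightInv : (L⁻¹)ᵀ * G * (R⁻¹)ᵀ * ((L⁻¹)ᵀ * G * (R⁻¹)ᵀ)ᵀ *
      (μ • (L * (G * Gᵀ)⁻¹ * Lᵀ)) = 1 := by
    rw [hGram, Matrix.smul_mul, Matrix.mul_smul, smul_smul, inv_mul_cancel₀ hμ, one_smul,
      transpose_inv_mul_mul_inv_mul_mul_mul_transpose hL hG]
  refine ⟨(isUnit_iff_isUnit_det _).mpr (isUnit_det_of_right_inverse hRightInv), ?_⟩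
  have hLd : IsUnit L.det := (isUnit_iff_isUnit_det L).mp hL
  calc _ = μ • (L * (G * Gᵀ)⁻¹ * Lᵀ) * (μ⁻¹ • ((L⁻¹)ᵀ * G * R)) := by
        rw [inv_eq_right_inv hRightInv, hG']
    _ = L * (G * Gᵀ)⁻¹ * (L⁻¹ * L)ᵀ * G * R := by
        rw [Matrix.smul_mul, Matrix.mul_smul, smul_smul, mul_inv_cancel₀ hμ, one_smul,
          transpose_mul]
        simp only [Matrix.mul_assoc]
    _ = L * (G * Gᵀ)⁻¹ * G * R := by
        rw [nonsing_inv_mul L hLd, transpose_one, Matrix.mul_one]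

end Matrix

/-- If `G Gᵀ` is invertible, `L` is invertible and `R = λ Q` with `λ ≠ 0` and
`Q` orthogonal, then setting `G' = L⁻ᵀ G R⁻ᵀ`, the matrix `G' G'ᵀ` is invertible and
`(G' G'ᵀ)⁻¹ G' = L (G Gᵀ)⁻¹ G R`. -/
theorem stmt6 {m n : ℕ}
    (G : Matrix (Fin m) (Fin n) ℝ) (hG : IsUnit (G * Gᵀ))
    (L : Matrix (Fin m) (Fin m) ℝ) (hL : IsUnit L)
    (lam : ℝ) (hlam : lam ≠ 0)
    (Q : Matrix (Fin n) (Fin n) ℝ) (hQ : Qᵀ * Q = 1)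
    (R : Matrix (Fin n) (Fin n) ℝ) (hR : R = lam • Q)
    (G' : Matrix (Fin m) (Fin n) ℝ) (hG' : G' = (L⁻¹)ᵀ * G * (R⁻¹)ᵀ) :
    IsUnit (G' * G'ᵀ) ∧ (G' * G'ᵀ)⁻¹ * G' = L * (G * Gᵀ)⁻¹ * G * R := by
  have hRconformal : R * Rᵀ = (lam * lam) • 1 := by
    rw [hR, Matrix.transpose_smul, Matrix.smul_mul, Matrix.mul_smul, smul_smul,
      mul_eq_one_comm.mp hQ]
  subst hG'
  exact Matrix.isUnit_and_inv_mul_of_mul_transpose_eq_smul hG hL (mul_ne_zero hlam hlam)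
    hRconformal
end

section
/- Fix an integer r ≥ 1 and let 𝔯(r, r) be the set of real rational functions of the form x ↦ x·P(x^{2r})/Q(x^{2r}) where P, Q ∈ ℝ[x] and Q(t) > 0 for all t ≥ 0 (so that the denominator x ↦ Q(x^{2r}) is strictly positive on all of ℝ and the function is globally defined). Then 𝔯(r, r) is closed under composition: if q₁, q₂ ∈ 𝔯(r, r) then q₁ ∘ q₂ ∈ 𝔯(r, r). -/
/-- The class `𝔯(r, r)` of globally defined rational functions of the form
`x ↦ x · P(x^(2r)) / Q(x^(2r))` with `P, Q` real polynomials and `Q` strictly positive on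
`[0, ∞)`. -/
def RatClass (r : ℕ) : Set (ℝ → ℝ) :=
  {f | ∃ P Q : Polynomial ℝ, (∀ t : ℝ, 0 ≤ t → 0 < Q.eval t) ∧
    ∀ x : ℝ, f x = x * P.eval (x ^ (2 * r)) / Q.eval (x ^ (2 * r))}

open Polynomial Finset in
private lemma key_homog (p : Polynomial ℝ) (n : ℕ) (hn : p.natDegree ≤ n) (u v : ℝ)
    (hv : v ≠ 0) :
    ∑ i ∈ Finset.range (n + 1), p.coeff i * u ^ i * v ^ (n - i) = p.eval (u / v) * v ^ n := by
  rw [Polynomial.eval_eq_sum_range' (Nat.lt_succ_of_le hn), Finset.sum_mul]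
  refine Finset.sum_congr rfl fun i hi => ?_
  have hin : i ≤ n := Nat.lt_succ_iff.mp (Finset.mem_range.mp hi)
  have hvn : v ^ i * v ^ (n - i) = v ^ n := pow_mul_pow_sub v hin
  rw [div_pow, ← hvn]
  field_simp

open Polynomial Finset in
/-- The class `𝔯(r, r)` is closed under composition. -/
theorem stmt9 (r : ℕ) (hr : 1 ≤ r) (q₁ q₂ : ℝ → ℝ)
    (h₁ : q₁ ∈ RatClass r) (h₂ : q₂ ∈ RatClass r) :
    q₁ ∘ q₂ ∈ RatClass r := by
  obtain ⟨P₁, Q₁, hQ₁, hf₁⟩ := h₁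
  obtain ⟨P₂, Q₂, hQ₂, hf₂⟩ := h₂
  set m := 2 * r with hm
  set n := max P₁.natDegree Q₁.natDegree with hn
  set U : Polynomial ℝ := X * P₂ ^ m with hU
  set V : Polynomial ℝ := Q₂ ^ m with hV
  set A : Polynomial ℝ :=
    ∑ i ∈ Finset.range (n + 1), C (P₁.coeff i) * U ^ i * V ^ (n - i) with hA
  set B : Polynomial ℝ :=
    ∑ i ∈ Finset.range (n + 1), C (Q₁.coeff i) * U ^ i * V ^ (n - i) with hB
  have hUeval : ∀ t : ℝ, U.eval t = t * P₂.eval t ^ m := by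
    intro t; simp [hU]
  have hVeval : ∀ t : ℝ, V.eval t = Q₂.eval t ^ m := by
    intro t; simp [hV]
  have hAeval : ∀ t : ℝ,
      A.eval t = ∑ i ∈ Finset.range (n + 1), P₁.coeff i * U.eval t ^ i * V.eval t ^ (n - i) := by
    intro t
    simp only [hA, Polynomial.eval_finset_sum, Polynomial.eval_mul, Polynomial.eval_pow,
      Polynomial.eval_C]
  have hBeval : ∀ t : ℝ,
      B.eval t = ∑ i ∈ Finset.range (n + 1), Q₁.coeff i * U.eval t ^ i * V.eval t ^ (n - i) := by
    intro t
    simp only [hB, Polynomial.eval_finset_sum, Polynomial.eval_mul, Polynomial.eval_pow,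
      Polynomial.eval_C]
  -- positivity facts
  have hVpos : ∀ t : ℝ, 0 ≤ t → 0 < V.eval t := fun t ht => by
    rw [hVeval]; exact pow_pos (hQ₂ t ht) m
  have hUnonneg : ∀ t : ℝ, 0 ≤ t → 0 ≤ U.eval t := fun t ht => by
    rw [hUeval]
    exact mul_nonneg ht (by rw [hm, mul_comm 2 r, pow_mul]; positivity)
  have hBpos : ∀ t : ℝ, 0 ≤ t → 0 < B.eval t := by
    intro t ht
    have hv := hVpos t ht
    rw [hBeval, key_homog Q₁ n (le_max_right _ _) _ _ hv.ne']
    exact mul_pos (hQ₁ _ (div_nonneg (hUnonneg t ht) hv.le)) (pow_pos hv n)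
  refine ⟨P₂ * A, Q₂ * B, fun t ht => by
    rw [Polynomial.eval_mul]; exact mul_pos (hQ₂ t ht) (hBpos t ht), fun x => ?_⟩
  have hy : (0 : ℝ) ≤ x ^ m := by
    rw [hm, mul_comm 2 r, pow_mul]; positivity
  set y := x ^ m with hydef
  have hq2pow : q₂ x ^ m = U.eval y / V.eval y := by
    rw [hf₂ x, div_pow, mul_pow, hUeval, hVeval, ← hydef]
  have hv := (hVpos y hy)
  have hq2 : Q₂.eval y ≠ 0 := (hQ₂ y hy).ne'
  have hb : B.eval y ≠ 0 := (hBpos y hy).ne'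
  have hAev : A.eval y = P₁.eval (U.eval y / V.eval y) * V.eval y ^ n := by
    rw [hAeval, key_homog P₁ n (le_max_left _ _) _ _ hv.ne']
  have hBev : B.eval y = Q₁.eval (U.eval y / V.eval y) * V.eval y ^ n := by
    rw [hBeval, key_homog Q₁ n (le_max_right _ _) _ _ hv.ne']
  have hq1 : Q₁.eval (U.eval y / V.eval y) ≠ 0 := by
    exact (hQ₁ _ (div_nonneg (hUnonneg y hy) hv.le)).ne'
  have hPev : (P₂ * A).eval y = P₂.eval y * A.eval y := Polynomial.eval_mul
  have hQev : (Q₂ * B).eval y = Q₂.eval y * B.eval y := Polynomial.eval_mul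
  simp only [Function.comp_apply]
  rw [hf₁ (q₂ x), hq2pow, hf₂ x, ← hydef, hPev, hQev, hAev, hBev]
  field_simp
end

section
/- Let A ∈ ℝ^{p×k}, and suppose Q₁ ∈ ℝ^{p×k}, Q₂ ∈ ℝ^{k×k}, and R ∈ ℝ^{k×k} satisfy A = Q₁·R, I_k = Q₂·R, and Q₁ᵀQ₁ + Q₂ᵀQ₂ = I_k (i.e. the stacked matrix [A; I_k] ∈ ℝ^{(p+k)×k} has the thin QR factorization [Q₁; Q₂]·R with [Q₁; Q₂] having orthonormal columns). Then R is invertible, I_k + AᵀA is invertible, and Q₂·Q₂ᵀ = (I_k + AᵀA)⁻¹. -/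
open scoped Matrix

namespace Matrix

variable {m n α : Type*} [Fintype m] [Fintype n] [DecidableEq n] [CommRing α]

theorem one_add_transpose_mul_self_eq_of_stacked_qr {A Q₁ : Matrix m n α} {Q₂ R : Matrix n n α}
    (hA : A = Q₁ * R) (hI : Q₂ * R = 1) (horth : Q₁ᵀ * Q₁ + Q₂ᵀ * Q₂ = 1) :
    1 + Aᵀ * A = Rᵀ * R :=
  calc 1 + Aᵀ * A = (Q₂ * R)ᵀ * (Q₂ * R) + (Q₁ * R)ᵀ * (Q₁ * R) := by
        rw [hI, hA, transpose_one, Matrix.one_mul]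
    _ = Rᵀ * (Q₁ᵀ * Q₁ + Q₂ᵀ * Q₂) * R := by
        simp only [transpose_mul, Matrix.mul_add, Matrix.add_mul, Matrix.mul_assoc]
        exact add_comm _ _
    _ = Rᵀ * R := by rw [horth, Matrix.mul_one]

theorem mul_transpose_eq_inv_of_mul_eq_one {B R : Matrix n n α} (h : B * R = 1) :
    B * Bᵀ = (Rᵀ * R)⁻¹ := by
  rw [mul_inv_rev, ← transpose_nonsing_inv, inv_eq_left_inv h]

end Matrix

/-- Block-QR identity underlying the QDWH iteration: if the stacked matrix
`[A; I_k]` has a thin QR factorization `[Q₁; Q₂] R` (i.e. `A = Q₁ R`, `I = Q₂ R`, and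
`Q₁ᵀ Q₁ + Q₂ᵀ Q₂ = I`), then `R` and `I + Aᵀ A` are invertible and
`Q₂ Q₂ᵀ = (I + Aᵀ A)⁻¹`. -/
theorem stmt16 {p k : ℕ}
    (A : Matrix (Fin p) (Fin k) ℝ)
    (Q₁ : Matrix (Fin p) (Fin k) ℝ) (Q₂ R : Matrix (Fin k) (Fin k) ℝ)
    (hA : A = Q₁ * R) (hI : (1 : Matrix (Fin k) (Fin k) ℝ) = Q₂ * R)
    (horth : Q₁ᵀ * Q₁ + Q₂ᵀ * Q₂ = 1) :
    IsUnit R ∧ IsUnit (1 + Aᵀ * A) ∧ Q₂ * Q₂ᵀ = (1 + Aᵀ * A)⁻¹ := by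
  have hR : IsUnit R := IsUnit.of_mul_eq_one_right Q₂ hI.symm
  rw [Matrix.one_add_transpose_mul_self_eq_of_stacked_qr hA hI.symm horth]
  exact ⟨hR, (Matrix.isUnit_transpose R).mpr hR |>.mul hR,
    Matrix.mul_transpose_eq_inv_of_mul_eq_one hI.symm⟩
end
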